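/- Every semicovering map is a Hurewicz fibration with discrete fibers. -/

import Mathlib

/-!
Lift every path `t ↦ g (z, t)` to the unique path starting at `f z`; the only issue is continuity
of the resulting homotopy in `z`. Near a slice `{z₀} × I`, the local homeomorphism `p` gives (by
the usual Lebesgue-number subdivision of `I`) a continuous lift on a tube `N × I`, and uniqueness
of path lifts shows it agrees with the pointwise lift. Discreteness of fibers is local
injectivity of `p`.
-/

open unitInterval Topology

/-- The space of paths in `X` starting at `x`, as a subspace of `C(I, X)`
with the compact-open topology. -/
abbrev PS (X : Type*) [TopologicalSpace X] (x : X) : Type _ := {f : C(I, X) // f 0 = x}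

/-- The map on based path spaces induced by `p`. -/
def indMap {E X : Type*} [TopologicalSpace E] [TopologicalSpace X] (p : C(E, X)) (e : E) :
    PS E e → PS X (p e) :=
  fun α => ⟨p.comp α.1, by simp [α.2]⟩

/-- `p` has the unique path-lifting property. -/
def UniquePathLifting {E X : Type*} [TopologicalSpace E] [TopologicalSpace X]
    (p : C(E, X)) : Prop :=
  ∀ e : E, Function.Injective (indMap p e)

/-- `p` has the path-covering property. -/
def PathCovering {E X : Type*} [TopologicalSpace E] [TopologicalSpace X]
    (p : C(E, X)) : Prop :=
  ∀ e : E, Function.Bijective (indMap p e)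

/-- `p` has the continuous path-covering property. -/
def ContPathCovering {E X : Type*} [TopologicalSpace E] [TopologicalSpace X]
    (p : C(E, X)) : Prop :=
  ∀ e : E, IsHomeomorph (indMap p e)

/-- A space is totally path-disconnected if every path in it is constant. -/
def TotallyPathDisconnected (Z : Type*) [TopologicalSpace Z] : Prop :=
  ∀ γ : C(I, Z), ∀ s t : I, γ s = γ t

/-- `p` has the homotopy lifting property with respect to `Z`. -/
def HLP {E X : Type*} [TopologicalSpace E] [TopologicalSpace X] (p : C(E, X))
    (Z : Type*) [TopologicalSpace Z] : Prop :=
  ∀ (f : C(Z, E)) (g : C(Z × I, X)), (∀ z, g (z, 0) = p (f z)) →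
    ∃ G : C(Z × I, E), (∀ w, p (G w) = g w) ∧ ∀ z, G (z, 0) = f z

section PathLifting

variable {E X : Type*} [TopologicalSpace E] [TopologicalSpace X] {p : C(E, X)}

theorem ContPathCovering.pathCovering (hp : ContPathCovering p) : PathCovering p :=
  fun e => (hp e).bijective

theorem PathCovering.uniquePathLifting (hp : PathCovering p) : UniquePathLifting p :=
  fun e => (hp e).injective

theorem UniquePathLifting.eq_of_comp_eq (hp : UniquePathLifting p) {α β : C(I, E)}
    (h0 : α 0 = β 0) (hcomp : p.comp α = p.comp β) : α = β :=
  congrArg Subtype.val <|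
    hp (α 0) (a₁ := ⟨α, rfl⟩) (a₂ := ⟨β, h0.symm⟩) (Subtype.ext hcomp)

theorem PathCovering.exists_lift (hp : PathCovering p) (γ : C(I, X)) {e : E}
    (he : γ 0 = p e) :
    ∃ α : C(I, E), α 0 = e ∧ p.comp α = γ := by
  obtain ⟨α, hα⟩ := (hp e).surjective ⟨γ, he⟩
  exact ⟨α.1, α.2, congrArg Subtype.val hα⟩

end PathLifting

namespace IsLocalHomeomorph

variable {E X A : Type*} [TopologicalSpace E] [TopologicalSpace X] [TopologicalSpace A]
  {p : C(E, X)}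

theorem continuous_lift_of_uniquePathLifting (hloc : IsLocalHomeomorph p)
    (hp : UniquePathLifting p) (F : C(I × A, X)) {G : I × A → E} (G_lifts : p ∘ G = F)
    (cont_0 : Continuous (G ⟨0, ·⟩)) (cont_A : ∀ a, Continuous (G ⟨·, a⟩)) : Continuous G := by
  rw [continuous_iff_continuousAt]
  rintro ⟨t, a⟩
  obtain ⟨N, haN, G', cont_G', G'_lifts, G'_0, -⟩ :=
    hloc.exists_lift_nhds G_lifts cont_0 a (cont_A a)
  refine (cont_G'.congr fun ⟨t, b⟩ ⟨_, hb⟩ => ?_).continuousAt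
    (prod_mem_nhds Filter.univ_mem haN)
  have hG'b : Continuous (G' ⟨·, b⟩) :=
    cont_G'.comp_continuous (.prodMk_left b) fun _ => ⟨trivial, hb⟩
  have := hp.eq_of_comp_eq (α := ⟨_, cont_A b⟩) (β := ⟨_, hG'b⟩) (G'_0 b).symm <| by
    ext s; exact congr_fun (G_lifts.trans G'_lifts.symm) (s, b)
  exact ContinuousMap.congr_fun this t

theorem discreteTopology_fiber {f : E → X} (hf : IsLocalHomeomorph f) (x : X) :
    DiscreteTopology {e : E // f e = x} := by
  have hinj := hf.isLocallyInjective.comp_right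
    (continuous_subtype_val (p := (f · = x))) Subtype.val_injective
  rwa [show f ∘ Subtype.val = fun _ => x from funext Subtype.prop,
    ← discreteTopology_iff_locallyInjective] at hinj

theorem hlp_of_pathCovering (hloc : IsLocalHomeomorph p) (hp : PathCovering p) : HLP p A := by
  intro f g hg
  choose α hα0 hαp using fun z => hp.exists_lift (g.comp ⟨(z, ·), by fun_prop⟩) (hg z)
  have hcont : Continuous fun tz : I × A => α tz.2 tz.1 :=
    hloc.continuous_lift_of_uniquePathLifting hp.uniquePathLifting (g.comp .prodSwap)
      (funext fun tz => ContinuousMap.congr_fun (hαp tz.2) tz.1)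
      (by simpa only [hα0] using f.continuous) fun z => (α z).continuous
  exact ⟨⟨_, hcont.comp continuous_swap⟩,
    fun w => ContinuousMap.congr_fun (hαp w.1) w.2, hα0⟩

end IsLocalHomeomorph

/-- Every semicovering map (a local homeomorphism with the continuous
path-covering property) is a Hurewicz fibration with discrete fibers. -/
theorem stmt12 {E X : Type*} [TopologicalSpace E] [TopologicalSpace X] (p : C(E, X))
    (hloc : IsLocalHomeomorph p) (hp : ContPathCovering p) :
    (∀ (Z : Type u_3) [TopologicalSpace Z], HLP p Z) ∧
      ∀ x : X, DiscreteTopology {e : E // p e = x} :=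
  ⟨fun _ _ => hloc.hlp_of_pathCovering hp.pathCovering, hloc.discreteTopology_fiber⟩
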